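/- arXiv:2311.08291 — 2 statements merged into one kernel-verified Lean document; each statement's English description precedes it below -/
import Mathlib

section
/- (One-vs-rest Corollary) Let N ≥ 2 and let the time-evolved N-body state be the unit vector ψ_t : {0,1}^N → ℂ with ψ_t(J) = 2^{−N/2}·exp(i·t·Σ_{p<q} φ_{pq}(J_p,J_q)). Let ρ(t) be the 2×2 reduced density matrix of qubit 1, with entries ρ(t)_{x y} = Σ_{j ∈ {0,1}^{N−1}} ψ_t(x⌢j)·conj(ψ_t(y⌢j)) for x, y ∈ {0,1}. Then the squared I-concurrence across the bipartition 1|(2,…,N) satisfies 2·(1 − Σ_{x,y}|ρ(t)_{xy}|²) = 1 − Π_{b=2}^{N} cos²(Φ_{1b}·t/2), where Φ_{1b} = φ_{1b}(0,1) + φ_{1b}(1,0) − φ_{1b}(0,0) − φ_{1b}(1,1). -/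
/-!
Only the pairs containing qubit 1 distinguish the two rows of `ρ`, so the partial trace over the
other qubits factorizes: `ρ x y = 2^{-(m+1)} ∏_b ∑_v exp (i t (φ_{1b}(x,v) - φ_{1b}(y,v)))`.
A sum of two unimodular numbers has modulus `2 |cos (half their phase difference)|`, which is `2`
for `x = y` and `2 |cos (Φ_{1b} t / 2)|` for `x ≠ y`. Hence `|ρ x x|² = 1/4` and
`|ρ x y|² = (1/4) ∏_b cos² (Φ_{1b} t / 2)` for `x ≠ y`.
-/

open Real

def pairPhase {n : ℕ} {α : Type*} (φ : Fin n → Fin n → α → α → ℝ) (J : Fin n → α) : ℝ :=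
  ∑ p, ∑ q, if p < q then φ p q (J p) (J q) else 0

lemma pairPhase_cons_sub_pairPhase_cons {m : ℕ} {α : Type*}
    (φ : Fin (m + 1) → Fin (m + 1) → α → α → ℝ) (x y : α) (j : Fin m → α) :
    pairPhase φ (Fin.cons x j) - pairPhase φ (Fin.cons y j)
      = ∑ b, (φ 0 b.succ x (j b) - φ 0 b.succ y (j b)) := by
  simp only [pairPhase, Fin.sum_univ_succ, Fin.cons_zero, Fin.cons_succ, if_false, Fin.succ_pos,
    if_true, Fin.not_lt_zero, Fin.succ_lt_succ_iff, zero_add, Finset.sum_sub_distrib]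
  ring

section

open Complex

lemma exp_mul_I_add_exp_mul_I (a b : ℝ) :
    exp (a * I) + exp (b * I)
      = exp (((a + b) / 2 : ℝ) * I) * (2 * Real.cos ((a - b) / 2) : ℝ) := by
  push_cast
  rw [Complex.cos, mul_div_cancel₀ _ two_ne_zero, mul_add, ← Complex.exp_add, ← Complex.exp_add]
  ring_nf

lemma norm_exp_mul_I_add_exp_mul_I_sq (a b : ℝ) :
    ‖exp (a * I) + exp (b * I)‖ ^ 2 = 4 * Real.cos ((a - b) / 2) ^ 2 := by
  rw [exp_mul_I_add_exp_mul_I, norm_mul, norm_exp_ofReal_mul_I, one_mul, norm_real,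
    Real.norm_eq_abs, sq_abs]
  ring

lemma norm_prod_sum_fin_two_exp_mul_I_sq {ι : Type*} [Fintype ι] (g : ι → Fin 2 → ℝ) :
    ‖∏ i, ∑ v, exp (g i v * I)‖ ^ 2
      = 4 ^ Fintype.card ι * ∏ i, Real.cos ((g i 0 - g i 1) / 2) ^ 2 := by
  simp only [norm_prod, ← Finset.prod_pow, Fin.sum_univ_two, norm_exp_mul_I_add_exp_mul_I_sq,
    Finset.prod_mul_distrib, Finset.prod_const, Finset.card_univ]

lemma ofReal_mul_exp_mul_conj (c a b : ℝ) :
    (c * exp (I * a)) * starRingEnd ℂ (c * exp (I * b))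
      = (c ^ 2 : ℝ) * exp ((a - b : ℝ) * I) := by
  rw [map_mul, conj_ofReal, ← exp_conj, map_mul, conj_I, conj_ofReal, mul_mul_mul_comm,
    ← Complex.exp_add]
  push_cast
  ring_nf

lemma sum_cons_mul_conj_cons_eq_prod {m : ℕ} {α : Type*} [Fintype α]
    (φ : Fin (m + 1) → Fin (m + 1) → α → α → ℝ) (c t : ℝ) (x y : α) :
    ∑ j : Fin m → α, (c * exp (I * (t * pairPhase φ (Fin.cons x j) : ℝ))) *
        starRingEnd ℂ (c * exp (I * (t * pairPhase φ (Fin.cons y j) : ℝ)))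
      = (c ^ 2 : ℝ) * ∏ b : Fin m, ∑ v, exp ((t * (φ 0 b.succ x v - φ 0 b.succ y v) : ℝ) * I) := by
  rw [Fintype.prod_sum, Finset.mul_sum]
  refine Finset.sum_congr rfl fun j _ => ?_
  rw [ofReal_mul_exp_mul_conj, ← mul_sub, pairPhase_cons_sub_pairPhase_cons, Finset.mul_sum,
    ofReal_sum, Finset.sum_mul, Complex.exp_sum]

end

lemma cos_sq_half_phase_diff (f : Fin 2 → Fin 2 → ℝ) (t : ℝ) (x y : Fin 2) :
    Real.cos ((t * (f x 0 - f y 0) - t * (f x 1 - f y 1)) / 2) ^ 2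
      = if x = y then 1 else Real.cos ((f 0 1 + f 1 0 - f 0 0 - f 1 1) * t / 2) ^ 2 := by
  revert x y
  simp only [Fin.forall_fin_two, if_pos, sub_self, mul_zero, zero_div, Real.cos_zero, one_pow,
    true_and, and_true]
  refine ⟨?_, ?_⟩
  · rw [if_neg (by decide), ← Real.cos_neg]
    ring_nf
  · rw [if_neg (by decide)]
    ring_nf

lemma sq_sq_one_div_sqrt_two_pow_succ_mul_four_pow (m : ℕ) :
    ((1 / √(2 ^ (m + 1)) : ℝ) ^ 2) ^ 2 * 4 ^ m = 1 / 4 := by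
  rw [div_pow, one_pow, Real.sq_sqrt (by positivity)]
  field_simp
  rw [← pow_mul, pow_mul', pow_succ]
  norm_num

theorem one_vs_rest_I_concurrence_general (m : ℕ)
    (φ : Fin (m + 1) → Fin (m + 1) → Fin 2 → Fin 2 → ℝ) (t : ℝ)
    (phiJ : (Fin (m + 1) → Fin 2) → ℝ)
    (hphiJ : ∀ J, phiJ J = ∑ p, ∑ q, if p < q then φ p q (J p) (J q) else 0)
    (ψ : (Fin (m + 1) → Fin 2) → ℂ)
    (hψ : ∀ J, ψ J = Complex.ofReal (1 / Real.sqrt (2 ^ (m + 1))) *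
      Complex.exp (Complex.I * Complex.ofReal (t * phiJ J)))
    (ρ : Fin 2 → Fin 2 → ℂ)
    (hρ : ∀ x y, ρ x y = ∑ j : Fin m → Fin 2,
      ψ (Fin.cons x j) * (starRingEnd ℂ) (ψ (Fin.cons y j))) :
    2 * (1 - ∑ x : Fin 2, ∑ y : Fin 2, ‖ρ x y‖ ^ 2) =
      1 - ∏ b : Fin m,
        Real.cos ((φ 0 b.succ 0 1 + φ 0 b.succ 1 0 -
          φ 0 b.succ 0 0 - φ 0 b.succ 1 1) * t / 2) ^ 2 := by
  have hphase : phiJ = pairPhase φ := funext hphiJ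
  have hentry : ∀ x y, ‖ρ x y‖ ^ 2 = 1 / 4 * ∏ b : Fin m, if x = y then 1 else
      Real.cos ((φ 0 b.succ 0 1 + φ 0 b.succ 1 0 - φ 0 b.succ 0 0 - φ 0 b.succ 1 1) * t / 2) ^ 2 := by
    intro x y
    simp only [hρ, hψ, hphase, sum_cons_mul_conj_cons_eq_prod, norm_mul, Complex.norm_real,
      Real.norm_eq_abs, mul_pow, sq_abs, norm_prod_sum_fin_two_exp_mul_I_sq, Fintype.card_fin,
      ← mul_assoc, sq_sq_one_div_sqrt_two_pow_succ_mul_four_pow, cos_sq_half_phase_diff]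
  simp only [Fin.sum_univ_two, hentry, Finset.prod_ite_irrel, Finset.prod_const_one, ↓reduceIte,
    zero_ne_one, one_ne_zero]
  ring

/-- (One-vs-rest corollary) Writing `N = m + 1` with qubit 1 as index 0, the
squared I-concurrence of the time-evolved N-body QGEM state across the
bipartition of qubit 1 versus the rest equals
`1 − Π_{b} cos²(Φ_{1b}·t/2)`, where `Φ_{1b}` is the signed entangling phase of
the pair formed by qubit 1 and qubit `b`. -/
theorem one_vs_rest_I_concurrence (m : ℕ) (hm : 1 ≤ m)
    (φ : Fin (m + 1) → Fin (m + 1) → Fin 2 → Fin 2 → ℝ) (t : ℝ)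
    (phiJ : (Fin (m + 1) → Fin 2) → ℝ)
    (hphiJ : ∀ J, phiJ J = ∑ p, ∑ q, if p < q then φ p q (J p) (J q) else 0)
    (ψ : (Fin (m + 1) → Fin 2) → ℂ)
    (hψ : ∀ J, ψ J = Complex.ofReal (1 / Real.sqrt (2 ^ (m + 1))) *
      Complex.exp (Complex.I * Complex.ofReal (t * phiJ J)))
    (ρ : Fin 2 → Fin 2 → ℂ)
    (hρ : ∀ x y, ρ x y = ∑ j : Fin m → Fin 2,
      ψ (Fin.cons x j) * (starRingEnd ℂ) (ψ (Fin.cons y j))) :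
    2 * (1 - ∑ x : Fin 2, ∑ y : Fin 2, ‖ρ x y‖ ^ 2) =
      1 - ∏ b : Fin m,
        Real.cos ((φ 0 b.succ 0 1 + φ 0 b.succ 1 0 -
          φ 0 b.succ 0 0 - φ 0 b.succ 1 1) * t / 2) ^ 2 :=
  one_vs_rest_I_concurrence_general m φ t phiJ hphiJ ψ hψ ρ hρ
end

section
/- (N-qubit GHZ entanglement) Let N ≥ 2 and let Φ ≠ 0 be a real number. Suppose that for every pair a < b in {1,…,N} the entangling phase satisfies Φ_{ab} = (2·n_{ab} + 1)·Φ for some integer n_{ab} ≥ 0 (so the ratio of any two entangling phases is a ratio of two odd integers). Then for every integer n ≥ 0 and every subset S ⊆ {1,…,N} with 1 ≤ |S| ≤ ⌊N/2⌋, at time t = (2·n + 1)·π/Φ the reduced density matrix ρ_S(t) of the qubits in S, with entries ρ_S(t)_{xy} = Σ_{j : Sᶜ → {0,1}} ψ_t(x∪j)·conj(ψ_t(y∪j)), satisfies 2·(1 − Σ_{x,y}|ρ_S(t)_{xy}|²) = 1; i.e. the time-evolved state periodically becomes a generalised N-qubit GHZ state with I-concurrence 1 (1 ebit of entanglement) across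 every bipartition. -/
/-!
Tr ρ_S² is the sum over `x, y, j, j'` of `ψ(x∪j) ψ̄(y∪j) ψ̄(x∪j') ψ(y∪j')`. Each term has
modulus `4^{-N}`, and its phase is `t` times a mixed second difference of the pair phases, to
which only pairs straddling the cut contribute: a pair `p ∈ S`, `q ∉ S` contributes `∓t Φ_pq`,
an odd multiple of `π`, exactly when `x_p ≠ y_p` and `j_q ≠ j'_q`. Hence each term is `4^{-N}`
times a product of signs. Summing over `j, j'` gives `(2 + 2Q)^{|Sᶜ|}`, where `Q = ±1` is the
parity of the number of sites where `x` and `y` differ; this vanishes unless `Q = 1`, which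
holds for half of the pairs `(x, y)`. So Tr ρ_S² = `4^{-N} · 4^{|Sᶜ|} · 4^{|S|} / 2 = 1/2`.
-/

open Real

/-- Combine an assignment `x` of bits to the qubits in `S` with an assignment
`j` of bits to the qubits in `Sᶜ` into a full bit string. -/
def QGEM.merge {N : ℕ} (S : Finset (Fin N)) (x : {i : Fin N // i ∈ S} → Fin 2)
    (j : {i : Fin N // i ∈ Sᶜ} → Fin 2) : Fin N → Fin 2 :=
  fun i => if h : i ∈ S then x ⟨i, h⟩ else j ⟨i, Finset.mem_compl.mpr h⟩

open ComplexConjugate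
open scoped Complex
open Complex (I)

namespace QGEM

theorem exp_I_mul_odd_mul_pi {m : ℤ} (hm : Odd m) : cexp (I * ((m * π : ℝ) : ℂ)) = -1 := by
  rw [show I * ((m * π : ℝ) : ℂ) = m * (π * I) by push_cast; ring, Complex.exp_int_mul,
    Complex.exp_pi_mul_I, hm.neg_one_zpow]

theorem exp_I_mul_mixed_diff (g : Fin 2 → Fin 2 → ℝ) (t : ℝ) {m : ℤ} (hm : Odd m)
    (ht : t * (g 0 1 + g 1 0 - g 0 0 - g 1 1) = m * π) (a b c d : Fin 2) :
    cexp (I * ((t * (g a c - g b c - g a d + g b d) : ℝ) : ℂ))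
      = if a = b ∨ c = d then 1 else -1 := by
  have hzero : ∀ r : ℝ, r = 0 → cexp (I * (r : ℂ)) = 1 := by
    rintro r rfl; simp
  have hpos : ∀ r : ℝ, r = m * π → cexp (I * (r : ℂ)) = -1 := by
    rintro r rfl; exact exp_I_mul_odd_mul_pi hm
  have hneg : ∀ r : ℝ, r = -(m * π) → cexp (I * (r : ℂ)) = -1 := by
    rintro r rfl; rw [← neg_mul, ← Int.cast_neg]; exact exp_I_mul_odd_mul_pi hm.neg
  -- the mixed difference is `∓(g 0 1 + g 1 0 - g 0 0 - g 1 1)` if `a ≠ b` and `c ≠ d`, else `0`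
  fin_cases a <;> fin_cases b <;> fin_cases c <;> fin_cases d <;>
    simp only [Fin.zero_eta, Fin.mk_one, Fin.isValue, Fin.reduceEq, true_or, or_true, or_self,
      if_true, if_false] <;>
    first
      | exact hzero _ (by ring)
      | exact hpos _ (by linarith)
      | exact hneg _ (by linarith)

section Pairs

variable {ι : Type*}

def pairSign (X Y X' : ι → Fin 2) (p q : ι) : ℂ :=
  if X p = Y p ∨ X q = X' q then 1 else -1

-- `X, Y, X', Y'` stand for `x ∪ j, y ∪ j, x ∪ j', y ∪ j'`, cf. `merge_agree`.
theorem exp_I_mul_pair_diff (g : Fin 2 → Fin 2 → ℝ) (t : ℝ) {m : ℤ} (hm : Odd m)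
    (ht : t * (g 0 1 + g 1 0 - g 0 0 - g 1 1) = m * π) {X Y X' Y' : ι → Fin 2}
    (hXY : ∀ p, (X p = X' p ∧ Y p = Y' p) ∨ (X p = Y p ∧ X' p = Y' p)) (p q : ι) :
    cexp (I * ((t * (g (X p) (X q) - g (Y p) (Y q) - g (X' p) (X' q) + g (Y' p) (Y' q)) : ℝ) : ℂ))
      = pairSign X Y X' p q * pairSign X Y X' q p := by
  rcases hXY p with ⟨hp, hp'⟩ | ⟨hp, hp'⟩ <;> rcases hXY q with ⟨hq, hq'⟩ | ⟨hq, hq'⟩ <;>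
    rw [← hp, ← hp', ← hq, ← hq']
  · simp [pairSign, hp, hq]
  · rw [exp_I_mul_mixed_diff g t hm ht, pairSign, pairSign, if_pos (Or.inl hq), mul_one]
  · rw [sub_right_comm (g (X p) (X q)), exp_I_mul_mixed_diff g t hm ht, pairSign, pairSign,
      if_pos (Or.inl hp), one_mul]
    simp only [or_comm]
  · simp [pairSign, hp, hq]

theorem prod_prod_ite_lt_mul_swap {M : Type*} [CommMonoid M] [Fintype ι] [LinearOrder ι]
    (f : ι → ι → M) (hdiag : ∀ p, f p p = 1) :
    ∏ p, ∏ q, (if p < q then f p q * f q p else 1) = ∏ p, ∏ q, f p q := by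
  have hsplit : ∀ p q, f p q = (if p < q then f p q else 1) * (if q < p then f p q else 1) := by
    intro p q
    rcases lt_trichotomy p q with h | rfl | h
    · simp [h, h.not_gt]
    · simp [hdiag]
    · simp [h, h.not_gt]
  have hmul : ∀ p q, (if p < q then f p q * f q p else 1)
      = (if p < q then f p q else 1) * (if p < q then f q p else 1) := fun p q => by
    split_ifs <;> simp
  simp_rw [hmul, Finset.prod_mul_distrib]
  rw [Finset.prod_comm (f := fun p q => if p < q then f q p else 1), ← Finset.prod_mul_distrib]
  simp_rw [← Finset.prod_mul_distrib, ← hsplit]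

def pairPhase [Fintype ι] [LinearOrder ι] (φ : ι → ι → Fin 2 → Fin 2 → ℝ) (J : ι → Fin 2) : ℝ :=
  ∑ p, ∑ q, if p < q then φ p q (J p) (J q) else 0

theorem exp_I_mul_pairPhase_diff [Fintype ι] [LinearOrder ι] (φ : ι → ι → Fin 2 → Fin 2 → ℝ)
    (t : ℝ) (hφ : ∀ p q, p < q → ∃ m : ℤ, Odd m ∧
      t * (φ p q 0 1 + φ p q 1 0 - φ p q 0 0 - φ p q 1 1) = m * π)
    {X Y X' Y' : ι → Fin 2}
    (hXY : ∀ p, (X p = X' p ∧ Y p = Y' p) ∨ (X p = Y p ∧ X' p = Y' p)) :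
    cexp (I * ((t * pairPhase φ X - t * pairPhase φ Y - (t * pairPhase φ X' - t * pairPhase φ Y')
        : ℝ) : ℂ))
      = ∏ p, ∏ q, pairSign X Y X' p q := by
  have hsum : t * pairPhase φ X - t * pairPhase φ Y - (t * pairPhase φ X' - t * pairPhase φ Y')
      = ∑ p, ∑ q, if p < q then t * (φ p q (X p) (X q) - φ p q (Y p) (Y q)
          - φ p q (X' p) (X' q) + φ p q (Y' p) (Y' q)) else 0 := by
    simp only [pairPhase, Finset.mul_sum, ← Finset.sum_sub_distrib]
    refine Finset.sum_congr rfl fun p _ => Finset.sum_congr rfl fun q _ => ?_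
    split_ifs <;> ring
  have hdiag : ∀ p, pairSign X Y X' p p = 1 := fun p => by
    rcases hXY p with h | h <;> simp [pairSign, h.1]
  rw [hsum, ← prod_prod_ite_lt_mul_swap _ hdiag]
  push_cast
  simp only [Finset.mul_sum, Complex.exp_sum]
  refine Finset.prod_congr rfl fun p _ => Finset.prod_congr rfl fun q _ => ?_
  split_ifs with hpq
  · obtain ⟨m, hm, ht⟩ := hφ p q hpq
    exact_mod_cast exp_I_mul_pair_diff (φ p q) t hm ht hXY p q
  · simp

end Pairs

theorem sum_prod_ite_eq {R γ : Type*} [CommSemiring R] [Fintype γ] [DecidableEq γ] (c : R)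
    (x : γ → Fin 2) :
    ∑ y : γ → Fin 2, ∏ u, (if x u = y u then 1 else c) = (1 + c) ^ Fintype.card γ := by
  have hfactor : ∀ a : Fin 2, ∑ b : Fin 2, (if a = b then 1 else c) = 1 + c := by
    intro a; fin_cases a <;> simp [Fin.sum_univ_two, add_comm]
  rw [← Fintype.prod_sum (fun u b => if x u = b then (1 : R) else c)]
  simp [hfactor]

theorem two_mul_sum_prod_ite_or {R α β : Type*} [CommRing R] [Fintype α] [DecidableEq α]
    [Nonempty α] [Fintype β] [DecidableEq β] [Nonempty β] :
    2 * ∑ x : α → Fin 2, ∑ y : α → Fin 2, ∑ j : β → Fin 2, ∑ j' : β → Fin 2,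
        ∏ u, ∏ w, (if x u = y u ∨ j w = j' w then (1 : R) else -1)
      = 4 ^ Fintype.card α * 4 ^ Fintype.card β := by
  set Q : (α → Fin 2) → (α → Fin 2) → R := fun x y => ∏ u, if x u = y u then 1 else -1
  have hQ : ∀ x y, Q x y = 1 ∨ Q x y = -1 := fun x y =>
    Finset.prod_induction _ (fun z : R => z = 1 ∨ z = -1)
      (by rintro _ _ (rfl | rfl) (rfl | rfl) <;> simp) (by simp)
      (fun u _ => by split_ifs <;> simp)
  have hfactor : ∀ x y (j j' : β → Fin 2),
      ∏ u, ∏ w, (if x u = y u ∨ j w = j' w then (1 : R) else -1)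
        = ∏ w, (if j w = j' w then 1 else Q x y) := by
    intro x y j j'
    rw [Finset.prod_comm]
    refine Finset.prod_congr rfl fun w _ => ?_
    by_cases hw : j w = j' w <;> simp [hw, Q]
  have hpow : ∀ x y, 2 * (2 ^ Fintype.card β * (1 + Q x y) ^ Fintype.card β)
      = 4 ^ Fintype.card β * (1 + Q x y) := by
    intro x y
    rcases hQ x y with h | h <;> rw [h]
    · rw [show (4 : R) = 2 * 2 by norm_num, mul_pow]; ring
    · simp
  calc _ = ∑ x : α → Fin 2, ∑ y : α → Fin 2,
        2 * (2 ^ Fintype.card β * (1 + Q x y) ^ Fintype.card β) := by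
        simp [Finset.mul_sum, hfactor, sum_prod_ite_eq]
    _ = 4 ^ Fintype.card β * ∑ x : α → Fin 2, ∑ y : α → Fin 2, (1 + Q x y) := by
        simp only [hpow, Finset.mul_sum]
    _ = 4 ^ Fintype.card α * 4 ^ Fintype.card β := by
        have hQsum : ∀ x, ∑ y, Q x y = 0 := fun x => by simp [Q, sum_prod_ite_eq]
        simp [Finset.sum_add_distrib, hQsum, ← mul_pow, mul_comm]
        norm_num

section Merge

variable {N : ℕ} (S : Finset (Fin N)) (x y : {i // i ∈ S} → Fin 2) (j j' : {i // i ∈ Sᶜ} → Fin 2)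

theorem merge_of_mem {p : Fin N} (hp : p ∈ S) : merge S x j p = x ⟨p, hp⟩ := dif_pos hp

theorem merge_of_notMem {p : Fin N} (hp : p ∉ S) :
    merge S x j p = j ⟨p, Finset.mem_compl.mpr hp⟩ := dif_neg hp

theorem merge_agree (p : Fin N) :
    (merge S x j p = merge S x j' p ∧ merge S y j p = merge S y j' p) ∨
      (merge S x j p = merge S y j p ∧ merge S x j' p = merge S y j' p) := by
  by_cases hp : p ∈ S
  · left; simp [merge_of_mem S _ _ hp]
  · right; simp [merge_of_notMem S _ _ hp]

theorem prod_pairSign_merge :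
    ∏ p, ∏ q, pairSign (merge S x j) (merge S y j) (merge S x j') p q
      = ∏ u, ∏ w, (if x u = y u ∨ j w = j' w then 1 else -1) := by
  have hout : ∀ p ∈ Finset.univ, p ∉ S →
      ∏ q, pairSign (merge S x j) (merge S y j) (merge S x j') p q = 1 := fun p _ hp =>
    Finset.prod_eq_one fun q _ => if_pos (Or.inl (by simp [merge_of_notMem S _ _ hp]))
  rw [← Finset.prod_subset (Finset.subset_univ S) hout, ← Finset.prod_coe_sort]
  refine Finset.prod_congr rfl fun u _ => ?_
  have hin : ∀ q ∈ Finset.univ, q ∉ Sᶜ →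
      pairSign (merge S x j) (merge S y j) (merge S x j') u q = 1 := fun q _ hq =>
    if_pos (Or.inr (by simp [merge_of_mem S _ _ (Finset.notMem_compl.mp hq)]))
  rw [← Finset.prod_subset (Finset.subset_univ Sᶜ) hin, ← Finset.prod_coe_sort]
  refine Finset.prod_congr rfl fun w _ => ?_
  simp [pairSign, merge_of_mem S _ _ u.2, merge_of_notMem S _ _ (Finset.mem_compl.mp w.2)]

end Merge

theorem ofReal_sq_norm_sum {β : Type*} [Fintype β] (f : β → ℂ) :
    (‖∑ j, f j‖ : ℂ) ^ 2 = ∑ j, ∑ j', f j * conj (f j') := by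
  rw [← Complex.mul_conj', map_sum, Finset.sum_mul_sum]

theorem ofReal_mul_exp_mul_conj (c c' r s : ℝ) :
    c * cexp (I * r) * conj (c' * cexp (I * s))
      = ((c * c' : ℝ) : ℂ) * cexp (I * ((r - s : ℝ) : ℂ)) := by
  rw [map_mul, Complex.conj_ofReal, ← Complex.exp_conj, map_mul, Complex.conj_I,
    Complex.conj_ofReal]
  push_cast
  rw [mul_sub, sub_eq_add_neg, Complex.exp_add]
  ring_nf

end QGEM

theorem N_body_GHZ_entanglement_general (N : ℕ)
    (φ : Fin N → Fin N → Fin 2 → Fin 2 → ℝ)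
    (Φ0 : ℝ) (hΦ0 : Φ0 ≠ 0)
    (hodd : ∀ a b : Fin N, a < b → ∃ n : ℕ,
      φ a b 0 1 + φ a b 1 0 - φ a b 0 0 - φ a b 1 1 = (2 * (n : ℝ) + 1) * Φ0)
    (phiJ : (Fin N → Fin 2) → ℝ)
    (hphiJ : ∀ J, phiJ J = ∑ p, ∑ q, if p < q then φ p q (J p) (J q) else 0)
    (ψ : ℝ → (Fin N → Fin 2) → ℂ)
    (hψ : ∀ t J, ψ t J = Complex.ofReal (1 / Real.sqrt (2 ^ N)) *
      Complex.exp (Complex.I * Complex.ofReal (t * phiJ J))) :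
    ∀ n : ℕ, ∀ S : Finset (Fin N), 1 ≤ S.card → S.card ≤ N / 2 →
      2 * (1 - ∑ x : {i : Fin N // i ∈ S} → Fin 2,
        ∑ y : {i : Fin N // i ∈ S} → Fin 2,
          ‖(∑ j : {i : Fin N // i ∈ Sᶜ} → Fin 2,
            ψ ((2 * (n : ℝ) + 1) * π / Φ0) (QGEM.merge S x j) *
              (starRingEnd ℂ) (ψ ((2 * (n : ℝ) + 1) * π / Φ0) (QGEM.merge S y j)))‖ ^ 2)
        = 1 := by
  intro n S hS1 hS2
  obtain rfl : phiJ = QGEM.pairPhase φ := funext hphiJ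
  set t := (2 * (n : ℝ) + 1) * π / Φ0
  have hφ : ∀ p q : Fin N, p < q → ∃ m : ℤ, Odd m ∧
      t * (φ p q 0 1 + φ p q 1 0 - φ p q 0 0 - φ p q 1 1) = m * π := by
    intro p q hpq
    obtain ⟨k, hk⟩ := hodd p q hpq
    refine ⟨(2 * n + 1) * (2 * k + 1), (odd_two_mul_add_one _).mul (odd_two_mul_add_one _), ?_⟩
    rw [hk]; push_cast
    linear_combination (2 * (k : ℝ) + 1) * (div_mul_cancel₀ ((2 * (n : ℝ) + 1) * π) hΦ0)
  have : Nonempty {i // i ∈ S} := (Finset.card_pos.mp hS1).to_subtype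
  have : Nonempty {i // i ∈ Sᶜ} := (Finset.card_pos.mp (by
    rw [Finset.card_compl, Fintype.card_fin]; omega)).to_subtype
  have hc : 1 / √(2 ^ N) * (1 / √(2 ^ N)) = 1 / 2 ^ N := by
    rw [one_div_mul_one_div, Real.mul_self_sqrt (by positivity)]
  have hterm : ∀ x y j j', ψ t (QGEM.merge S x j) * conj (ψ t (QGEM.merge S y j))
      * conj (ψ t (QGEM.merge S x j') * conj (ψ t (QGEM.merge S y j')))
      = ((1 / 2 ^ N * (1 / 2 ^ N) : ℝ) : ℂ)
        * ∏ u, ∏ w, (if x u = y u ∨ j w = j' w then 1 else -1) := by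
    intro x y j j'
    simp only [hψ, QGEM.ofReal_mul_exp_mul_conj, hc]
    rw [QGEM.exp_I_mul_pairPhase_diff φ t hφ (QGEM.merge_agree S x y j j'),
      QGEM.prod_pairSign_merge]
  have hcount := QGEM.two_mul_sum_prod_ite_or (R := ℂ) (α := {i // i ∈ S}) (β := {i // i ∈ Sᶜ})
  rw [← pow_add, Fintype.card_coe, Fintype.card_coe, Finset.card_add_card_compl,
    Fintype.card_fin, show (4 : ℂ) = 2 * 2 by norm_num, mul_pow] at hcount
  apply Complex.ofReal_injective
  push_cast
  simp only [QGEM.ofReal_sq_norm_sum, hterm, ← Finset.mul_sum]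
  push_cast
  field_simp
  linear_combination -hcount

/-- (N-qubit GHZ entanglement) If every signed entangling phase is an odd
multiple of a fixed `Φ ≠ 0`, then at the times `t = (2n+1)π/Φ` the time-evolved
N-body state has squared I-concurrence `2(1 − Tr ρ_S(t)²) = 1` across every
bipartition `S|Sᶜ` with `1 ≤ |S| ≤ ⌊N/2⌋`: it is a generalised GHZ state with
1 ebit across every bipartition. -/
theorem N_body_GHZ_entanglement (N : ℕ) (hN : 2 ≤ N)
    (φ : Fin N → Fin N → Fin 2 → Fin 2 → ℝ)
    (Φ0 : ℝ) (hΦ0 : Φ0 ≠ 0)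
    (hodd : ∀ a b : Fin N, a < b → ∃ n : ℕ,
      φ a b 0 1 + φ a b 1 0 - φ a b 0 0 - φ a b 1 1 = (2 * (n : ℝ) + 1) * Φ0)
    (phiJ : (Fin N → Fin 2) → ℝ)
    (hphiJ : ∀ J, phiJ J = ∑ p, ∑ q, if p < q then φ p q (J p) (J q) else 0)
    (ψ : ℝ → (Fin N → Fin 2) → ℂ)
    (hψ : ∀ t J, ψ t J = Complex.ofReal (1 / Real.sqrt (2 ^ N)) *
      Complex.exp (Complex.I * Complex.ofReal (t * phiJ J))) :
    ∀ n : ℕ, ∀ S : Finset (Fin N), 1 ≤ S.card → S.card ≤ N / 2 →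
      2 * (1 - ∑ x : {i : Fin N // i ∈ S} → Fin 2,
        ∑ y : {i : Fin N // i ∈ S} → Fin 2,
          ‖(∑ j : {i : Fin N // i ∈ Sᶜ} → Fin 2,
            ψ ((2 * (n : ℝ) + 1) * π / Φ0) (QGEM.merge S x j) *
              (starRingEnd ℂ) (ψ ((2 * (n : ℝ) + 1) * π / Φ0) (QGEM.merge S y j)))‖ ^ 2)
        = 1 :=
  N_body_GHZ_entanglement_general N φ Φ0 hΦ0 hodd phiJ hphiJ ψ hψ
end
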